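/- For all n ≥ 0, ∑_{k=0}^{n} C(n,k) w_k(y) = ((1+y)/y) · w_n(y) for n > 0, i.e., y · ∑_{k=0}^{n} C(n,k) w_k(y) = (1+y) · w_n(y) as polynomials. -/

import Mathlib

def stirling2 : ℕ → ℕ → ℕ
  | 0, 0 => 1
  | 0, _ + 1 => 0
  | _ + 1, 0 => 0
  | n + 1, k + 1 => (k + 1) * stirling2 n (k + 1) + stirling2 n k

/-- The geometric polynomials `w_n(y) = ∑_{k=0}^n S(n,k)·k!·y^k`. -/
def geomPoly (n : ℕ) (y : ℝ) : ℝ :=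
  ∑ k ∈ Finset.range (n + 1), (stirling2 n k : ℝ) * (Nat.factorial k : ℝ) * y ^ k

/-! Expanding each `w_k(y)` and exchanging the two sums turns the left side into
`∑_m (∑_k C(n,k) S(k,m)) m! y^(m+1) = ∑_m S(n+1,m+1) m! y^(m+1)`, by the binomial recurrence of
the Stirling numbers. The triangular recurrence `S(n+1,m+1) m! = S(n,m+1) (m+1)! + S(n,m) m!`
splits this into `(w_n(y) - S(n,0)) + y w_n(y)`, and `S(n,0) = 0` as `n > 0`. -/

open Finset Nat

theorem stirling2_eq_stirlingSecond : stirling2 = stirlingSecond := by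
  funext n k
  induction n generalizing k with
  | zero => cases k <;> rfl
  | succ n ih => cases k <;> simp [stirling2, stirlingSecond_succ_succ, ih]

theorem Nat.sum_range_choose_mul_stirlingSecond (n m : ℕ) :
    ∑ k ∈ range (n + 1), n.choose k * stirlingSecond k m = stirlingSecond (n + 1) (m + 1) := by
  induction n generalizing m with
  | zero => simp [stirlingSecond_succ_succ]
  | succ n ih =>
    have pascal := sum_choose_succ_mul (fun k _ ↦ stirlingSecond k m) n
    simp only [Nat.cast_id] at pascal
    rw [pascal, ih]
    cases m with
    | zero => simp [stirlingSecond_one_right]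
    | succ m =>
      have shifted : ∑ k ∈ range (n + 1), n.choose k * stirlingSecond (k + 1) (m + 1) =
          (m + 1) * stirlingSecond (n + 1) (m + 2) + stirlingSecond (n + 1) (m + 1) := by
        simp only [stirlingSecond_succ_succ _ m, mul_add, sum_add_distrib,
          mul_left_comm _ (m + 1), ← mul_sum, ih]
      rw [shifted, stirlingSecond_succ_succ (n + 1) (m + 1)]
      ring

theorem Nat.stirlingSecond_succ_succ_mul_factorial (n m : ℕ) :
    stirlingSecond (n + 1) (m + 1) * m ! =
      stirlingSecond n (m + 1) * (m + 1)! + stirlingSecond n m * m ! := by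
  rw [stirlingSecond_succ_succ, factorial_succ]
  ring

theorem geomPoly_eq_sum_range {n N : ℕ} (h : n < N) (y : ℝ) :
    geomPoly n y = ∑ k ∈ range N, (stirlingSecond n k : ℝ) * k ! * y ^ k := by
  rw [geomPoly, stirling2_eq_stirlingSecond]
  refine sum_subset (range_subset_range.2 h) fun k _ hk ↦ ?_
  rw [stirlingSecond_eq_zero_of_lt (by simpa using hk)]
  simp

theorem mul_sum_choose_geomPoly (n : ℕ) (y : ℝ) :
    y * ∑ k ∈ range (n + 1), (n.choose k : ℝ) * geomPoly k y =
      ∑ m ∈ range (n + 1), (stirlingSecond (n + 1) (m + 1) : ℝ) * m ! * y ^ (m + 1) := by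
  calc y * ∑ k ∈ range (n + 1), (n.choose k : ℝ) * geomPoly k y
      = ∑ k ∈ range (n + 1), ∑ m ∈ range (n + 1),
          (n.choose k : ℝ) * stirlingSecond k m * m ! * y ^ (m + 1) := by
        rw [mul_sum]
        refine sum_congr rfl fun k hk ↦ ?_
        rw [geomPoly_eq_sum_range (mem_range.1 hk), mul_sum, mul_sum]
        refine sum_congr rfl fun m _ ↦ ?_
        ring
    _ = ∑ m ∈ range (n + 1), (stirlingSecond (n + 1) (m + 1) : ℝ) * m ! * y ^ (m + 1) := by
        rw [sum_comm]
        refine sum_congr rfl fun m _ ↦ ?_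
        rw [← sum_range_choose_mul_stirlingSecond]
        push_cast
        rw [sum_mul, sum_mul]

theorem sum_stirlingSecond_succ_succ_mul_pow {n : ℕ} (hn : 0 < n) (y : ℝ) :
    ∑ m ∈ range (n + 1), (stirlingSecond (n + 1) (m + 1) : ℝ) * m ! * y ^ (m + 1) =
      (1 + y) * geomPoly n y := by
  set a : ℕ → ℝ := fun m ↦ stirlingSecond n m * m ! * y ^ m
  have shift : ∑ m ∈ range (n + 1), a (m + 1) = geomPoly n y := by
    have a_zero : a 0 = 0 := by
      obtain ⟨k, rfl⟩ := exists_eq_succ_of_ne_zero hn.ne'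
      simp [a]
    rw [geomPoly_eq_sum_range (by omega : n < n + 2), sum_range_succ' a, a_zero, add_zero]
  calc ∑ m ∈ range (n + 1), (stirlingSecond (n + 1) (m + 1) : ℝ) * m ! * y ^ (m + 1)
      = ∑ m ∈ range (n + 1), (a (m + 1) + y * a m) := by
        refine sum_congr rfl fun m _ ↦ ?_
        simp only [a, ← Nat.cast_mul, stirlingSecond_succ_succ_mul_factorial]
        push_cast
        ring
    _ = (1 + y) * geomPoly n y := by
        rw [sum_add_distrib, ← mul_sum, shift, ← geomPoly_eq_sum_range (lt_add_one n)]
        ring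

theorem sum_choose_geomPoly (n : ℕ) (hn : 0 < n) (y : ℝ) :
    y * ∑ k ∈ Finset.range (n + 1), (n.choose k : ℝ) * geomPoly k y
      = (1 + y) * geomPoly n y := by
  rw [mul_sum_choose_geomPoly, sum_stirlingSecond_succ_succ_mul_pow hn]
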